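/- Let D be a diagonal n×n real matrix with strictly increasing diagonal entries d₁ < d₂ < ⋯ < d_n, let M = {m₁ < ⋯ < m_p} ⊆ {1,…,n}, let m = m₁ + ⋯ + m_p, let E = Σ_{i∈M} Σ_{ii}, and consider the symmetric bilinear form H_E(Ω, Ω′) = tr([E, Ω] [D, Ω′]) on the p(n−p)-dimensional real vector space V spanned by { Ω_{ij} : i ∈ M, j ∉ M }. Then H_E is non-degenerate on V and its signature is (m − p(p+1)/2, np − p(p−1)/2 − m, 0): there is a basis of V diagonalizing H_E with exactly m − p(p+1)/2 positive diagonal entries, exactly np − p(p−1)/2 − m negative diagonal entries, and no zero diagonal entries. -/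

import Mathlib

open Matrix Finset

/-- `Om i j` is the skew-symmetric matrix `Ω_{ij}` with `(i,j)` entry `1`,
`(j,i)` entry `-1` and zeros elsewhere. -/
def Om {n : ℕ} (i j : Fin n) : Matrix (Fin n) (Fin n) ℝ :=
  Matrix.single i j 1 - Matrix.single j i 1

/-!
For `i ∈ M` and `j ∉ M`, both `[E, Ω_{ij}]` and `[D, Ω_{ij}]` are multiples of the symmetric
matrix `e_{ij} + e_{ji}`, namely by `1` and by `d_i - d_j`. Hence the matrices `Ω_{ij}` are
pairwise `H_E`-orthogonal with `H_E(Ω_{ij}, Ω_{ij}) = 2 (d_i - d_j) ≠ 0`: they form a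
diagonalizing basis of `V`, and `H_E` is non-degenerate on `V`. The positive vectors are those
with `j < i`; for fixed `i ∈ M` (counted from `0`) there are `i - #{k ∈ M | k < i}` of them,
and summing over `i` gives `m - p - p(p-1)/2`.
-/

section CommTraceForm

variable {ι R : Type*} [Fintype ι] [CommRing R]

def commTraceForm (E D : Matrix ι ι R) : LinearMap.BilinForm R (Matrix ι ι R) :=
  LinearMap.mk₂ R (fun X Y => trace ((E * X - X * E) * (D * Y - Y * D)))
    (fun X X' Y => by rw [← trace_add]; congr 1; noncomm_ring)
    (fun c X Y => by
      rw [← trace_smul, mul_smul_comm, smul_mul_assoc, ← smul_sub, smul_mul_assoc])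
    (fun X Y Y' => by rw [← trace_add]; congr 1; noncomm_ring)
    (fun c X Y => by
      rw [← trace_smul, mul_smul_comm, smul_mul_assoc, ← smul_sub, mul_smul_comm])

lemma commTraceForm_apply (E D X Y : Matrix ι ι R) :
    commTraceForm E D X Y = trace ((E * X - X * E) * (D * Y - Y * D)) := rfl

variable [DecidableEq ι]

lemma diagonal_mul_single_sub_single_mul_diagonal (u : ι → R) (i j : ι) (c : R) :
    diagonal u * single i j c - single i j c * diagonal u = (u i - u j) • single i j c := by
  ext a b
  simp only [Matrix.sub_apply, diagonal_mul, mul_diagonal, Matrix.smul_apply, single_apply,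
    smul_eq_mul]
  split_ifs with h
  · obtain ⟨rfl, rfl⟩ := h
    ring
  · simp

lemma sum_single_one_eq_diagonal (s : Finset ι) :
    ∑ i ∈ s, single i i (1 : R) = diagonal fun a => if a ∈ s then 1 else 0 := by
  rw [← sum_single_eq_diagonal]
  simp [apply_ite, Finset.sum_ite_mem]

end CommTraceForm

section OmFamily

variable {n : ℕ}

lemma diagonal_mul_Om_sub_Om_mul_diagonal (u : Fin n → ℝ) (i j : Fin n) :
    diagonal u * Om i j - Om i j * diagonal u = (u i - u j) • (single i j 1 + single j i 1) := by
  rw [Om, mul_sub, sub_mul, sub_sub_sub_comm, diagonal_mul_single_sub_single_mul_diagonal,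
    diagonal_mul_single_sub_single_mul_diagonal]
  module

def commTraceFormOfSet (M : Finset (Fin n)) (d : Fin n → ℝ) :
    LinearMap.BilinForm ℝ (Matrix (Fin n) (Fin n) ℝ) :=
  commTraceForm (diagonal fun a => if a ∈ M then 1 else 0) (diagonal d)

def omFamily (M : Finset (Fin n)) (x : M ×ˢ Mᶜ) : Matrix (Fin n) (Fin n) ℝ :=
  Om x.1.1 x.1.2

variable {M : Finset (Fin n)}

lemma commTraceFormOfSet_Om (d : Fin n → ℝ) {i j k l : Fin n} (hi : i ∈ M) (hj : j ∉ M)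
    (hk : k ∈ M) (hl : l ∉ M) :
    commTraceFormOfSet M d (Om i j) (Om k l) = if i = k ∧ j = l then 2 * (d i - d j) else 0 := by
  have hkj : k ≠ j := fun h => hj (h ▸ hk)
  have hil : i ≠ l := fun h => hl (h ▸ hi)
  rw [commTraceFormOfSet, commTraceForm_apply, diagonal_mul_Om_sub_Om_mul_diagonal,
    diagonal_mul_Om_sub_Om_mul_diagonal]
  simp only [hi, hj, if_true, if_false, sub_zero, one_smul, add_mul, trace_add, mul_smul_comm,
    trace_smul, trace_single_mul, Matrix.add_apply, single_apply]
  by_cases h : i = k ∧ j = l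
  · obtain ⟨rfl, rfl⟩ := h
    simp [hkj]
    ring
  · have h' : ¬(k = i ∧ l = j) := fun ⟨h1, h2⟩ => h ⟨h1.symm, h2.symm⟩
    simp [hkj, hil.symm, h, h']
    exact fun hlj hki => (h' ⟨hki, hlj⟩).elim

lemma commTraceFormOfSet_omFamily (d : Fin n → ℝ) (x y : M ×ˢ Mᶜ) :
    commTraceFormOfSet M d (omFamily M x) (omFamily M y)
      = if x = y then 2 * (d x.1.1 - d x.1.2) else 0 := by
  obtain ⟨⟨i, j⟩, hij⟩ := x
  obtain ⟨⟨k, l⟩, hkl⟩ := y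
  rw [mem_product, mem_compl] at hij hkl
  simp only [omFamily, Subtype.mk.injEq, Prod.mk.injEq]
  exact commTraceFormOfSet_Om d hij.1 hij.2 hkl.1 hkl.2

lemma iIsOrtho_omFamily (d : Fin n → ℝ) : (commTraceFormOfSet M d).iIsOrtho (omFamily M) :=
  fun x y hxy => by simp only [Function.onFun, commTraceFormOfSet_omFamily, if_neg hxy]

lemma commTraceFormOfSet_omFamily_self_ne_zero {d : Fin n → ℝ} (hd : Function.Injective d)
    (x : M ×ˢ Mᶜ) : commTraceFormOfSet M d (omFamily M x) (omFamily M x) ≠ 0 := by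
  obtain ⟨hi, hj⟩ := mem_product.1 x.2
  have hne : x.1.1 ≠ x.1.2 := fun h => mem_compl.1 hj (h ▸ hi)
  rw [commTraceFormOfSet_omFamily, if_pos rfl]
  exact mul_ne_zero two_ne_zero (sub_ne_zero.2 (hd.ne hne))

lemma commTraceFormOfSet_omFamily_self_pos_iff {d : Fin n → ℝ} (hd : StrictMono d)
    (x : M ×ˢ Mᶜ) :
    0 < commTraceFormOfSet M d (omFamily M x) (omFamily M x) ↔ x.1.2 < x.1.1 := by
  rw [commTraceFormOfSet_omFamily, if_pos rfl, mul_pos_iff_of_pos_left two_pos, sub_pos,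
    hd.lt_iff_lt]

lemma commTraceFormOfSet_omFamily_self_neg_iff {d : Fin n → ℝ} (hd : StrictMono d)
    (x : M ×ˢ Mᶜ) :
    commTraceFormOfSet M d (omFamily M x) (omFamily M x) < 0 ↔ ¬x.1.2 < x.1.1 := by
  rw [← commTraceFormOfSet_omFamily_self_pos_iff hd, not_lt, lt_iff_le_and_ne,
    and_iff_left (commTraceFormOfSet_omFamily_self_ne_zero hd.injective x)]

lemma span_range_omFamily (M : Finset (Fin n)) :
    Submodule.span ℝ (Set.range (omFamily M))
      = Submodule.span ℝ {X | ∃ i ∈ M, ∃ j ∉ M, X = Om i j} := by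
  congr 1
  ext X
  simp [omFamily, eq_comm, and_assoc]

end OmFamily

lemma LinearMap.BilinForm.nondegenerate_restrict_span_of_iIsOrtho {K W ι : Type*} [Field K]
    [AddCommGroup W] [Module K W] {B : LinearMap.BilinForm K W} {v : ι → W}
    (ho : B.iIsOrtho v) (hv : ∀ i, B (v i) (v i) ≠ 0) :
    (B.restrict (Submodule.span K (Set.range v))).Nondegenerate := by
  let b := Module.Basis.span (linearIndependent_of_iIsOrtho ho hv)
  have hb : ∀ i, (b i : W) = v i := fun i => by simp [b, Module.Basis.span_apply]
  refine (iIsOrtho.nondegenerate_iff_not_isOrtho_basis_self _ b fun i j hij => ?_).2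
    fun i => by simpa [hb] using hv i
  simpa [Function.onFun, hb] using ho hij

lemma Set.ncard_setOf_equiv_symm {α κ : Type*} {P : Finset α} (e : P ≃ κ) (Q : α → Prop)
    [DecidablePred Q] : {k | Q (e.symm k : α)}.ncard = #{x ∈ P | Q x} := by
  have hpre : {k | Q (e.symm k : α)} = (Subtype.val ∘ e.symm) ⁻¹' ↑{x ∈ P | Q x} := by
    ext k
    simp
  rw [hpre, Set.ncard_preimage_of_injective_subset_range
    (Subtype.val_injective.comp e.symm.injective), Set.ncard_coe_finset]
  intro x hx
  exact ⟨e ⟨x, (mem_filter.1 hx).1⟩, by simp⟩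

section Counting

lemma card_product_filter_snd_lt_fst {α : Type*} [LinearOrder α] (s : Finset α) :
    #{x ∈ s ×ˢ s | x.2 < x.1} = (#s).choose 2 :=
  card_product_filter_lt (α := αᵒᵈ) (s := s)

variable {n : ℕ} (s : Finset (Fin n))

lemma card_product_compl_filter_snd_lt_fst_add :
    #{x ∈ s ×ˢ sᶜ | x.2 < x.1} + #{x ∈ s ×ˢ s | x.2 < x.1} = ∑ i ∈ s, (i : ℕ) := by
  simp only [card_filter, sum_product, ← sum_add_distrib]
  refine sum_congr rfl fun i _ => ?_
  have hin : {j ∈ s | j < i} = {j ∈ Iio i | j ∈ s} := by ext; simp [and_comm]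
  have hout : {j ∈ sᶜ | j < i} = {j ∈ Iio i | j ∉ s} := by ext; simp [and_comm]
  rw [← card_filter, ← card_filter, hin, hout, add_comm, card_filter_add_card_filter_not,
    Fin.card_Iio]

lemma card_product_compl_filter_snd_lt_fst_add_choose :
    #{x ∈ s ×ˢ sᶜ | x.2 < x.1} + (#s + 1).choose 2 = ∑ i ∈ s, ((i : ℕ) + 1) := by
  rw [Nat.choose_succ_succ, Nat.choose_one_right, ← card_product_filter_snd_lt_fst,
    sum_add_distrib, ← card_product_compl_filter_snd_lt_fst_add, sum_const, smul_eq_mul,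
    mul_one]
  ring

lemma card_product_compl_filter_snd_lt_fst :
    #{x ∈ s ×ˢ sᶜ | x.2 < x.1} = ∑ i ∈ s, ((i : ℕ) + 1) - #s * (#s + 1) / 2 := by
  have h := card_product_compl_filter_snd_lt_fst_add_choose s
  rw [Nat.choose_two_right, Nat.add_sub_cancel, mul_comm] at h
  omega

lemma card_product_compl_filter_not_snd_lt_fst :
    #{x ∈ s ×ˢ sᶜ | ¬x.2 < x.1}
      = n * #s - #s * (#s - 1) / 2 - ∑ i ∈ s, ((i : ℕ) + 1) := by
  have hsplit := card_filter_add_card_filter_not (s := s ×ˢ sᶜ) fun x => x.2 < x.1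
  have hpos := card_product_compl_filter_snd_lt_fst_add_choose s
  have hchoose : (#s + 1).choose 2 = (#s).choose 2 + #s := by
    rw [Nat.choose_succ_succ, Nat.choose_one_right, add_comm]
  have htwice : (#s + 1).choose 2 * 2 = #s * #s + #s := by
    rw [← Nat.add_one_mul_choose_eq, Nat.choose_one_right]
    ring
  have hsq : #s * (n - #s) + #s * #s = n * #s := by
    have hle : #s ≤ n := by simpa using card_le_univ s
    rw [← Nat.mul_add, Nat.sub_add_cancel hle, mul_comm]
  rw [card_product, card_compl, Fintype.card_fin] at hsplit
  rw [← Nat.choose_two_right]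
  omega

end Counting

theorem stmt13_general {n p : ℕ}
    (d : Fin n → ℝ) (hd : StrictMono d)
    (M : Finset (Fin n)) (hcard : M.card = p)
    (m : ℕ) (hm : m = ∑ i ∈ M, ((i : ℕ) + 1))
    (D E : Matrix (Fin n) (Fin n) ℝ)
    (hD : D = Matrix.diagonal d)
    (hE : E = ∑ i ∈ M, Matrix.single i i (1 : ℝ))
    (H : Matrix (Fin n) (Fin n) ℝ → Matrix (Fin n) (Fin n) ℝ → ℝ)
    (hH : ∀ Ω Ω', H Ω Ω' =
      Matrix.trace ((E * Ω - Ω * E) * (D * Ω' - Ω' * D)))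
    (V : Submodule ℝ (Matrix (Fin n) (Fin n) ℝ))
    (hV : V = Submodule.span ℝ
      {X : Matrix (Fin n) (Fin n) ℝ | ∃ i ∈ M, ∃ j ∉ M, X = Om i j}) :
    (∀ Ω ∈ V, (∀ Ω' ∈ V, H Ω Ω' = 0) → Ω = 0) ∧
    ∃ b : Module.Basis (Fin (p * (n - p))) ℝ V,
      (∀ k l, k ≠ l → H (b k) (b l) = 0) ∧
      ({k : Fin (p * (n - p)) | 0 < H (b k) (b k)}.ncard = m - p * (p + 1) / 2) ∧
      ({k : Fin (p * (n - p)) | H (b k) (b k) < 0}.ncard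
        = n * p - p * (p - 1) / 2 - m) ∧
      (∀ k, H (b k) (b k) ≠ 0) := by
  obtain rfl : H = fun X Y => commTraceFormOfSet M d X Y := by
    funext X Y
    rw [hH, hD, hE, sum_single_one_eq_diagonal, commTraceFormOfSet, commTraceForm_apply]
  obtain rfl : V = Submodule.span ℝ (Set.range (omFamily M)) :=
    hV.trans (span_range_omFamily M).symm
  have hortho := iIsOrtho_omFamily (M := M) d
  have hself := commTraceFormOfSet_omFamily_self_ne_zero (M := M) hd.injective
  let e : M ×ˢ Mᶜ ≃ Fin (p * (n - p)) := Fintype.equivFinOfCardEq <| by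
    rw [Fintype.card_coe, card_product, card_compl, Fintype.card_fin, hcard]
  let b := (Module.Basis.span (LinearMap.BilinForm.linearIndependent_of_iIsOrtho hortho
    hself)).reindex e
  have hb : ∀ k, (b k : Matrix (Fin n) (Fin n) ℝ) = omFamily M (e.symm k) := fun k => by
    simp [b, Module.Basis.span_apply]
  refine ⟨fun Ω hΩ h => congrArg Subtype.val <|
      (LinearMap.BilinForm.nondegenerate_restrict_span_of_iIsOrtho hortho hself).1 ⟨Ω, hΩ⟩
        fun Ω' => h Ω' Ω'.2,
    b, fun k l hkl => by simpa [hb] using hortho (e.symm.injective.ne hkl), ?_, ?_,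
    fun k => by simpa [hb] using hself (e.symm k)⟩
  · simp only [hb, commTraceFormOfSet_omFamily_self_pos_iff hd]
    rw [Set.ncard_setOf_equiv_symm e fun x => x.2 < x.1, card_product_compl_filter_snd_lt_fst,
      hm, hcard]
  · simp only [hb, commTraceFormOfSet_omFamily_self_neg_iff hd]
    rw [Set.ncard_setOf_equiv_symm e fun x => ¬x.2 < x.1,
      card_product_compl_filter_not_snd_lt_fst, hm, hcard]

/-- Let `D` be diagonal with strictly increasing diagonal entries, `M ⊆ {1,…,n}` a
`p`-element subset with element sum `m` (elements counted in `1,…,n`), and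
`E = ∑_{i∈M} Σ_{ii}`. The symmetric bilinear form
`H(Ω,Ω') = tr([E,Ω][D,Ω'])` on the span `V` of `{Ω_{ij} : i ∈ M, j ∉ M}` is
non-degenerate with signature `(m − p(p+1)/2, np − p(p−1)/2 − m, 0)`: some basis of `V`
diagonalizes `H` with exactly `m − p(p+1)/2` positive, `np − p(p−1)/2 − m` negative and
no zero diagonal values. -/
theorem stmt13 {n p : ℕ} (hp1 : 1 ≤ p) (hpn : p ≤ n)
    (d : Fin n → ℝ) (hd : StrictMono d)
    (M : Finset (Fin n)) (hcard : M.card = p)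
    (m : ℕ) (hm : m = ∑ i ∈ M, ((i : ℕ) + 1))
    (D E : Matrix (Fin n) (Fin n) ℝ)
    (hD : D = Matrix.diagonal d)
    (hE : E = ∑ i ∈ M, Matrix.single i i (1 : ℝ))
    (H : Matrix (Fin n) (Fin n) ℝ → Matrix (Fin n) (Fin n) ℝ → ℝ)
    (hH : ∀ Ω Ω', H Ω Ω' =
      Matrix.trace ((E * Ω - Ω * E) * (D * Ω' - Ω' * D)))
    (V : Submodule ℝ (Matrix (Fin n) (Fin n) ℝ))
    (hV : V = Submodule.span ℝ
      {X : Matrix (Fin n) (Fin n) ℝ | ∃ i ∈ M, ∃ j ∉ M, X = Om i j}) :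
    (∀ Ω ∈ V, (∀ Ω' ∈ V, H Ω Ω' = 0) → Ω = 0) ∧
    ∃ b : Module.Basis (Fin (p * (n - p))) ℝ V,
      (∀ k l, k ≠ l → H (b k) (b l) = 0) ∧
      ({k : Fin (p * (n - p)) | 0 < H (b k) (b k)}.ncard = m - p * (p + 1) / 2) ∧
      ({k : Fin (p * (n - p)) | H (b k) (b k) < 0}.ncard
        = n * p - p * (p - 1) / 2 - m) ∧
      (∀ k, H (b k) (b k) ≠ 0) :=
  stmt13_general d hd M hcard m hm D E hD hE H hH V hV
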